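/- (General measurements, trade-off) Let τ_β = e^{-βH}/Z on H_B with τ_β^⊤ = τ_β. For any POVM {σ_x} on A acting on the canonical purification |τ_β⟩_{AB}, define p_x = Tr(σ_x τ_β) and ρ_x = √τ_β σ_x^⊤ √τ_β / p_x. Then for any unitaries {U_x} on B with E_x = Tr(H(ρ_x - U_x ρ_x U_x†)), one has Σ_x p_x(S(ρ_x) + βE_x) ≤ S(τ_β), and consequently, writing the teleported ensemble average ρ = Σ_x p_x ρ_x = τ_β, the entanglement of formation satisfies E_f(ρ) + βE ≤ S(τ_β), where E := Σ_x p_x E_x and E_f(ρ) = min over ensembles {q_i, ρ_i} with Σ q_i ρ_i = ρ of Σ q_i S(ρ_i). -/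

import Mathlib

open Matrix BigOperators Finset
open scoped Kronecker ComplexOrder

noncomputable section

variable {n : Type*} [Fintype n] [DecidableEq n]

/-- Functional calculus for Hermitian matrices (junk value `0` otherwise). -/
def matFun (f : ℝ → ℝ) (A : Matrix n n ℂ) : Matrix n n ℂ :=
  if hA : A.IsHermitian then
    (hA.eigenvectorUnitary : Matrix n n ℂ) *
      Matrix.diagonal (fun i => (f (hA.eigenvalues i) : ℂ)) *
      star (hA.eigenvectorUnitary : Matrix n n ℂ)
  else 0

/-- Von Neumann entropy (natural log). -/
def vnEntropy (A : Matrix n n ℂ) : ℝ :=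
  if hA : A.IsHermitian then ∑ i, Real.negMulLog (hA.eigenvalues i) else 0

/-- Umegaki relative entropy `Tr ρ (log ρ - log σ)`. -/
def relEnt (ρ σ : Matrix n n ℂ) : ℝ :=
  ((ρ * (matFun Real.log ρ - matFun Real.log σ)).trace).re

/-- Partition function `Z = Tr e^{-βH}`. -/
def gibbsZ (β : ℝ) (H : Matrix n n ℂ) : ℝ :=
  ((matFun (fun x => Real.exp (-(β * x))) H).trace).re

/-- Gibbs (thermal) state `e^{-βH}/Z`. -/
def gibbs (β : ℝ) (H : Matrix n n ℂ) : Matrix n n ℂ :=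
  ((gibbsZ β H : ℂ)⁻¹) • matFun (fun x => Real.exp (-(β * x))) H

/-- Density matrix predicate. -/
def IsDensity (ρ : Matrix n n ℂ) : Prop := ρ.PosSemidef ∧ ρ.trace = 1

def IsUnitaryMat (U : Matrix n n ℂ) : Prop := U ∈ Matrix.unitaryGroup n ℂ

/-- Outer product `|v⟩⟨v|`. -/
def outer {m : Type*} (v : m → ℂ) : Matrix m m ℂ :=
  Matrix.of fun i j => v i * (starRingEnd ℂ) (v j)

/-- Unnormalized maximally entangled vector `∑ₓ |x⟩|x⟩`. -/
def maxEnt (d : ℕ) : Fin d × Fin d → ℂ := fun p => if p.1 = p.2 then 1 else 0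

/-- Positive square root of a Hermitian matrix (via eigenvalues). -/
def matSqrt (A : Matrix n n ℂ) : Matrix n n ℂ := matFun Real.sqrt A

/-- Partial trace over the first tensor factor. -/
def ptraceFst {m k : Type*} [Fintype m] (ρ : Matrix (m × k) (m × k) ℂ) : Matrix k k ℂ :=
  Matrix.of fun j1 j2 => ∑ i, ρ (i, j1) (i, j2)

/-- Partial trace over the second tensor factor. -/
def ptraceSnd {m k : Type*} [Fintype k] (ρ : Matrix (m × k) (m × k) ℂ) : Matrix m m ℂ :=
  Matrix.of fun i1 i2 => ∑ j, ρ (i1, j) (i2, j)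


/-- Entanglement of formation (as the infimum of average ensemble entropy over
all ensemble decompositions, cf. the context of the statement). -/
def EoF {d : ℕ} (ρ : Matrix (Fin d) (Fin d) ℂ) : ℝ :=
  sInf {e : ℝ | ∃ (k : ℕ) (q : Fin k → ℝ) (ρs : Fin k → Matrix (Fin d) (Fin d) ℂ),
    (∀ i, 0 ≤ q i) ∧ (∀ i, IsDensity (ρs i)) ∧
    (∑ i, (q i : ℂ) • ρs i = ρ) ∧ e = ∑ i, q i * vnEntropy (ρs i)}


set_option linter.unusedSectionVars false
set_option maxHeartbeats 1000000


lemma herm_conj_diag (W : Matrix n n ℂ) (g : n → ℝ) :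
    (W * diagonal (fun i => (g i : ℂ)) * star W).IsHermitian := by
  have : star (W * diagonal (fun i => (g i : ℂ)) * star W)
      = W * diagonal (fun i => (g i : ℂ)) * star W := by
    simp only [StarMul.star_mul, star_star, Matrix.star_eq_conjTranspose, diagonal_conjTranspose]
    simp [Matrix.mul_assoc, Pi.star_def, Complex.star_def, Complex.conj_ofReal]
  exact this

lemma unitary_conj_trace {W : Matrix n n ℂ} (hW : W ∈ Matrix.unitaryGroup n ℂ)
    (D : Matrix n n ℂ) : (W * D * star W).trace = D.trace := by
  rw [Matrix.trace_mul_cycle, Matrix.mem_unitaryGroup_iff'.mp hW, Matrix.one_mul]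

lemma eig_multiset {A : Matrix n n ℂ} (hA : A.IsHermitian) {W : Matrix n n ℂ}
    (hW : W ∈ Matrix.unitaryGroup n ℂ) (g : n → ℝ)
    (hdec : A = W * diagonal (fun i => (g i : ℂ)) * star W) :
    Multiset.map hA.eigenvalues Finset.univ.val = Multiset.map g Finset.univ.val := by
  have key : ∀ z : ℂ, ∏ i, (z - (hA.eigenvalues i : ℂ)) = ∏ i, (z - (g i : ℂ)) := by
    intro z
    have det_conj : ∀ (W' : Matrix n n ℂ), W' ∈ Matrix.unitaryGroup n ℂ →
        ∀ (g' : n → ℝ), A = W' * diagonal (fun i => (g' i : ℂ)) * star W' →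
        det (z • (1 : Matrix n n ℂ) - A) = ∏ i, (z - (g' i : ℂ)) := by
      intro W' hW' g' hdec'
      have h1 : z • (1 : Matrix n n ℂ) - A
          = W' * diagonal (fun i => z - (g' i : ℂ)) * star W' := by
        rw [hdec']
        have h2 : z • (1 : Matrix n n ℂ) = W' * (z • (1 : Matrix n n ℂ)) * star W' := by
          rw [mul_smul_comm, smul_mul_assoc, Matrix.mul_one,
            Matrix.mem_unitaryGroup_iff.mp hW']
        rw [h2, ← Matrix.sub_mul, ← Matrix.mul_sub, Matrix.smul_one_eq_diagonal,
          diagonal_sub]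
      rw [h1, det_mul, det_mul, det_diagonal, mul_comm (det W'), mul_assoc, ← det_mul,
        Matrix.mem_unitaryGroup_iff.mp hW', det_one, mul_one]
    rw [← det_conj _ hA.eigenvectorUnitary.2 hA.eigenvalues (by
        simpa [Function.comp_def] using hA.spectral_theorem),
      det_conj W hW g hdec]
  have e1 : ∀ (h : n → ℝ) (z : ℂ),
      ((Multiset.map (fun a : ℂ => Polynomial.X - Polynomial.C a)
        (Multiset.map (fun i => (h i : ℂ)) Finset.univ.val)).prod).eval z
      = ∏ i, (z - (h i : ℂ)) := by
    intro h z
    rw [Multiset.map_map, Polynomial.eval_multiset_prod,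
      Finset.prod_eq_multiset_prod, Multiset.map_map]
    congr 1
    apply Multiset.map_congr rfl
    intro i _
    simp
  have poly : (Multiset.map (fun a : ℂ => Polynomial.X - Polynomial.C a)
        (Multiset.map (fun i => (hA.eigenvalues i : ℂ)) Finset.univ.val)).prod
      = (Multiset.map (fun a : ℂ => Polynomial.X - Polynomial.C a)
        (Multiset.map (fun i => (g i : ℂ)) Finset.univ.val)).prod := by
    apply Polynomial.funext
    intro z
    rw [e1, e1, key]
  have h3 := congrArg Polynomial.roots poly
  rw [Polynomial.roots_multiset_prod_X_sub_C, Polynomial.roots_multiset_prod_X_sub_C] at h3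
  have h4 : Multiset.map (fun x : ℝ => (x : ℂ)) (Multiset.map hA.eigenvalues Finset.univ.val)
      = Multiset.map (fun x : ℝ => (x : ℂ)) (Multiset.map g Finset.univ.val) := by
    rw [Multiset.map_map, Multiset.map_map]
    exact h3
  exact Multiset.map_injective Complex.ofReal_injective h4

lemma sum_f_eig {A : Matrix n n ℂ} (hA : A.IsHermitian) {W : Matrix n n ℂ}
    (hW : W ∈ Matrix.unitaryGroup n ℂ) (g : n → ℝ)
    (hdec : A = W * diagonal (fun i => (g i : ℂ)) * star W) (f : ℝ → ℝ) :
    ∑ i, f (hA.eigenvalues i) = ∑ i, f (g i) := by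
  have h := congrArg (fun s => (Multiset.map f s).sum) (eig_multiset hA hW g hdec)
  simp only [Multiset.map_map] at h
  rw [Finset.sum_eq_multiset_sum, Finset.sum_eq_multiset_sum]
  exact h


lemma psd_exists_eq_conjTranspose_mul_self {M : Matrix n n ℂ} (hM : M.PosSemidef) :
    ∃ B : Matrix n n ℂ, M = Bᴴ * B := by
  have hdec := hM.1.spectral_theorem
  rw [Unitary.conjStarAlgAut_apply] at hdec
  refine ⟨diagonal (fun i => ((Real.sqrt (hM.1.eigenvalues i) : ℝ) : ℂ)) *
    (hM.1.eigenvectorUnitary : Matrix n n ℂ)ᴴ, ?_⟩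
  conv_lhs => rw [hdec]
  rw [Matrix.conjTranspose_mul, Matrix.conjTranspose_conjTranspose, diagonal_conjTranspose,
    ← Matrix.star_eq_conjTranspose]
  simp only [Matrix.mul_assoc]
  rw [← Matrix.mul_assoc (diagonal (star _)), diagonal_mul_diagonal]
  congr 3
  funext i
  simp [← Complex.ofReal_mul, Real.mul_self_sqrt (hM.eigenvalues_nonneg i)]

lemma psd_trace_nonneg {M : Matrix n n ℂ} (hM : M.PosSemidef) : 0 ≤ M.trace := by
  obtain ⟨B, rfl⟩ := psd_exists_eq_conjTranspose_mul_self hM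
  rw [Matrix.trace]
  apply Finset.sum_nonneg
  intro j _
  rw [Matrix.diag_apply, Matrix.mul_apply]
  apply Finset.sum_nonneg
  intro i _
  simpa using star_mul_self_nonneg (B i j)

lemma psd_trace_eq_zero {M : Matrix n n ℂ} (hM : M.PosSemidef) (h : M.trace = 0) :
    M = 0 := by
  obtain ⟨B, rfl⟩ := psd_exists_eq_conjTranspose_mul_self hM
  suffices hB : B = 0 by simp [hB]
  have h2 : ∑ j, ∑ i, star (B i j) * B i j = 0 := by
    rw [← h, Matrix.trace]
    apply Finset.sum_congr rfl
    intro j _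
    rw [Matrix.diag_apply, Matrix.mul_apply]
    rfl
  ext i j
  have hnn : ∀ j ∈ Finset.univ, (0:ℂ) ≤ ∑ i, star (B i j) * B i j := fun j _ =>
    Finset.sum_nonneg fun i _ => by simpa using star_mul_self_nonneg (B i j)
  have h3 := (Finset.sum_eq_zero_iff_of_nonneg hnn).mp h2 j (Finset.mem_univ j)
  have h4 := (Finset.sum_eq_zero_iff_of_nonneg (fun i _ => by
    simpa using star_mul_self_nonneg (B i j))).mp h3 i (Finset.mem_univ i)
  rw [Complex.star_def, ← Complex.normSq_eq_conj_mul_self, Complex.ofReal_eq_zero,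
    Complex.normSq_eq_zero] at h4
  simpa using h4

lemma psd_trace_re {M : Matrix n n ℂ} (hM : M.PosSemidef) :
    M.trace = ((M.trace.re : ℝ) : ℂ) := by
  have h := psd_trace_nonneg hM
  rw [Complex.le_def] at h
  have him : M.trace.im = 0 := by simpa using h.2.symm
  apply Complex.ext <;> simp [him]


lemma conj_diag_mul {W : Matrix n n ℂ} (hW : W ∈ Matrix.unitaryGroup n ℂ) (g h : n → ℂ) :
    (W * diagonal g * star W) * (W * diagonal h * star W)
      = W * diagonal (fun i => g i * h i) * star W := by
  have h1 : star W * W = 1 := Matrix.mem_unitaryGroup_iff'.mp hW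
  calc (W * diagonal g * star W) * (W * diagonal h * star W)
      = W * ((diagonal g * (star W * W) * diagonal h) * star W) := by
        simp only [Matrix.mul_assoc]
    _ = W * diagonal (fun i => g i * h i) * star W := by
        rw [h1, Matrix.mul_one, diagonal_mul_diagonal, ← Matrix.mul_assoc]

lemma matFun_spec (f : ℝ → ℝ) {A : Matrix n n ℂ} (hA : A.IsHermitian) :
    matFun f A = (hA.eigenvectorUnitary : Matrix n n ℂ) *
      diagonal (fun i => (f (hA.eigenvalues i) : ℂ)) *
      star (hA.eigenvectorUnitary : Matrix n n ℂ) := by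
  rw [matFun, dif_pos hA]

lemma vnEntropy_spec {A : Matrix n n ℂ} (hA : A.IsHermitian) {W : Matrix n n ℂ}
    (hW : W ∈ Matrix.unitaryGroup n ℂ) (g : n → ℝ)
    (hdec : A = W * diagonal (fun i => (g i : ℂ)) * star W) :
    vnEntropy A = ∑ i, Real.negMulLog (g i) := by
  rw [vnEntropy, dif_pos hA]
  exact sum_f_eig hA hW g hdec _

lemma trace_eq_sum_eigs {A : Matrix n n ℂ} (hA : A.IsHermitian) :
    A.trace = ((∑ i, hA.eigenvalues i : ℝ) : ℂ) := by
  conv_lhs => rw [hA.spectral_theorem, Unitary.conjStarAlgAut_apply]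
  rw [unitary_conj_trace hA.eigenvectorUnitary.2, Matrix.trace_diagonal]
  push_cast
  rfl

lemma vnEntropy_nonneg_of_density {ρ' : Matrix n n ℂ} (h : IsDensity ρ') :
    0 ≤ vnEntropy ρ' := by
  have hherm := h.1.isHermitian
  have hsum : ∑ i, hherm.eigenvalues i = 1 := by
    have := trace_eq_sum_eigs hherm
    rw [h.2] at this
    exact_mod_cast this.symm
  rw [vnEntropy, dif_pos hherm]
  apply Finset.sum_nonneg
  intro i _
  apply Real.negMulLog_nonneg (h.1.eigenvalues_nonneg i)
  calc hherm.eigenvalues i ≤ ∑ j, hherm.eigenvalues j :=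
        Finset.single_le_sum (fun j _ => h.1.eigenvalues_nonneg j) (Finset.mem_univ i)
    _ = 1 := hsum


lemma scalar_gibbs {q a : ℝ} (hq : 0 ≤ q) (ha : 0 < a) :
    Real.negMulLog q + q * Real.log a ≤ a - q := by
  rcases eq_or_lt_of_le hq with h0 | h0
  · simp [← h0]
    exact ha.le
  · have hlog : Real.log (a / q) ≤ a / q - 1 :=
      Real.log_le_sub_one_of_pos (div_pos ha h0)
    have : Real.negMulLog q + q * Real.log a = q * Real.log (a / q) := by
      rw [Real.log_div ha.ne' h0.ne', Real.negMulLog]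
      ring
    rw [this]
    calc q * Real.log (a / q) ≤ q * (a / q - 1) := by
          exact mul_le_mul_of_nonneg_left hlog hq
      _ = a - q := by field_simp
lemma gibbs_var_ineq [Nonempty n] {H : Matrix n n ℂ} (hH : H.IsHermitian) (β : ℝ)
    {ρ' : Matrix n n ℂ} (hρ' : IsDensity ρ') :
    vnEntropy ρ' ≤ β * ((H * ρ').trace).re
      + Real.log (∑ i, Real.exp (-(β * hH.eigenvalues i))) := by
  set V : Matrix n n ℂ := (hH.eigenvectorUnitary : Matrix n n ℂ) with hVdef
  have hV : V ∈ Matrix.unitaryGroup n ℂ := hH.eigenvectorUnitary.2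
  set lam : n → ℝ := hH.eigenvalues with hlamdef
  have hsym : ρ'.IsHermitian := hρ'.1.isHermitian
  set W : Matrix n n ℂ := (hsym.eigenvectorUnitary : Matrix n n ℂ) with hWdef
  have hW : W ∈ Matrix.unitaryGroup n ℂ := hsym.eigenvectorUnitary.2
  set q : n → ℝ := hsym.eigenvalues with hqdef
  have hρdec : ρ' = W * diagonal (fun i => (q i : ℂ)) * star W := by
    simpa [Function.comp_def] using hsym.spectral_theorem
  have hHdec : H = V * diagonal (fun i => (lam i : ℂ)) * star V := by
    simpa [Function.comp_def] using hH.spectral_theorem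
  have hq0 : ∀ j, 0 ≤ q j := fun j => hρ'.1.eigenvalues_nonneg j
  have hq1 : ∑ j, q j = 1 := by
    have := trace_eq_sum_eigs hsym
    rw [hρ'.2] at this
    exact_mod_cast this.symm
  set M : Matrix n n ℂ := star V * W with hMdef
  have hM : M ∈ Matrix.unitaryGroup n ℂ := mul_mem (Unitary.star_mem hV) hW
  set P : n → n → ℝ := fun i j => Complex.normSq (M i j) with hPdef
  have hP0 : ∀ i j, 0 ≤ P i j := fun i j => Complex.normSq_nonneg _
  have hcol : ∀ j, ∑ i, P i j = 1 := by
    intro j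
    have h1 : star M * M = 1 := Matrix.mem_unitaryGroup_iff'.mp hM
    have h2 : (star M * M) j j = 1 := by rw [h1]; simp
    rw [Matrix.mul_apply] at h2
    have h3 : ∑ i, ((P i j : ℝ) : ℂ) = 1 := by
      rw [← h2]
      apply Finset.sum_congr rfl
      intro i _
      simp [hPdef, Matrix.star_apply, Complex.star_def, Complex.normSq_eq_conj_mul_self]
    exact_mod_cast h3
  have hrow : ∀ i, ∑ j, P i j = 1 := by
    intro i
    have h1 : M * star M = 1 := Matrix.mem_unitaryGroup_iff.mp hM
    have h2 : (M * star M) i i = 1 := by rw [h1]; simp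
    rw [Matrix.mul_apply] at h2
    have h3 : ∑ j, ((P i j : ℝ) : ℂ) = 1 := by
      rw [← h2]
      apply Finset.sum_congr rfl
      intro j _
      have hmc : M i j * star (M i j) = ((P i j : ℝ) : ℂ) := by
        simp [hPdef, Complex.star_def, Complex.mul_conj]
      rw [Matrix.star_apply, hmc]
    exact_mod_cast h3
  set h : n → ℝ := fun j => ∑ i, lam i * P i j with hhdef
  -- trace computation
  have hB : star W * H * W = star M * diagonal (fun i => (lam i : ℂ)) * M := by
    rw [hHdec, hMdef]
    simp only [StarMul.star_mul, star_star, Matrix.mul_assoc]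
  have hBjj : ∀ j, (star W * H * W) j j = ((h j : ℝ) : ℂ) := by
    intro j
    rw [hB]
    rw [Matrix.mul_apply]
    have : ∀ i, (star M * diagonal (fun i => (lam i : ℂ))) j i * M i j
        = ((lam i * P i j : ℝ) : ℂ) := by
      intro i
      rw [Matrix.mul_diagonal, Matrix.star_apply]
      push_cast
      rw [Complex.star_def]
      rw [show (starRingEnd ℂ) (M i j) * (lam i : ℂ) * M i j
        = (lam i : ℂ) * ((starRingEnd ℂ) (M i j) * M i j) by ring]
      rw [← Complex.normSq_eq_conj_mul_self]
    rw [Finset.sum_congr rfl (fun i _ => this i)]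
    push_cast [hhdef]
    rfl
  have htr : ((H * ρ').trace).re = ∑ j, q j * h j := by
    have e1 : (H * ρ').trace = ((star W * H * W) * diagonal (fun i => (q i : ℂ))).trace := by
      conv_lhs => rw [hρdec]
      rw [show H * (W * diagonal (fun i => (q i : ℂ)) * star W)
          = W * ((star W * H * W) * diagonal (fun i => (q i : ℂ))) * star W by
        simp only [Matrix.mul_assoc, ← hρdec]
        rw [← Matrix.mul_assoc W (star W), Matrix.mem_unitaryGroup_iff.mp hW, Matrix.one_mul]]
      rw [unitary_conj_trace hW]
    rw [e1, Matrix.trace]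
    have e2 : ∀ j, ((star W * H * W) * diagonal (fun i => (q i : ℂ))).diag j
        = ((q j * h j : ℝ) : ℂ) := by
      intro j
      rw [Matrix.diag_apply, Matrix.mul_diagonal, hBjj]
      push_cast
      ring
    rw [Finset.sum_congr rfl (fun j _ => e2 j)]
    push_cast
    simp
  have hS : vnEntropy ρ' = ∑ j, Real.negMulLog (q j) := vnEntropy_spec hsym hW q hρdec
  -- Peierls-Bogoliubov
  set A : ℝ := ∑ j, Real.exp (-(β * h j)) with hAdef
  set Z : ℝ := ∑ i, Real.exp (-(β * lam i)) with hZdef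
  have hA0 : 0 < A := Finset.sum_pos (fun j _ => Real.exp_pos _) Finset.univ_nonempty
  have hZ0 : 0 < Z := Finset.sum_pos (fun i _ => Real.exp_pos _) Finset.univ_nonempty
  have hAZ : A ≤ Z := by
    have hj : ∀ j, Real.exp (-(β * h j)) ≤ ∑ i, P i j * Real.exp (-(β * lam i)) := by
      intro j
      have jensen := convexOn_exp.map_sum_le (t := Finset.univ)
        (w := fun i => P i j) (p := fun i => -(β * lam i))
        (fun i _ => hP0 i j) (hcol j) (fun i _ => Set.mem_univ _)
      have e3 : ∑ i, P i j • (-(β * lam i)) = -(β * h j) := by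
        rw [hhdef, Finset.mul_sum, ← Finset.sum_neg_distrib]
        apply Finset.sum_congr rfl
        intro i _
        simp [smul_eq_mul]
        ring
      rw [e3] at jensen
      simpa [smul_eq_mul] using jensen
    calc A ≤ ∑ j, ∑ i, P i j * Real.exp (-(β * lam i)) :=
          Finset.sum_le_sum (fun j _ => hj j)
      _ = ∑ i, (∑ j, P i j) * Real.exp (-(β * lam i)) := by
          rw [Finset.sum_comm]
          apply Finset.sum_congr rfl
          intro i _
          rw [Finset.sum_mul]
      _ = Z := by
          apply Finset.sum_congr rfl
          intro i _
          rw [hrow i, one_mul]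
  -- scalar Gibbs inequality
  have hmain : (∑ j, Real.negMulLog (q j)) - β * ∑ j, q j * h j ≤ Real.log A := by
    have hper : ∀ j, Real.negMulLog (q j) + q j * Real.log (Real.exp (-(β * h j)) / A)
        ≤ Real.exp (-(β * h j)) / A - q j := fun j =>
      scalar_gibbs (hq0 j) (div_pos (Real.exp_pos _) hA0)
    have hsumineq := Finset.sum_le_sum (fun j (_ : j ∈ Finset.univ) => hper j)
    have hlogeq : ∀ j, Real.log (Real.exp (-(β * h j)) / A) = -(β * h j) - Real.log A := by
      intro j
      rw [Real.log_div (Real.exp_ne_zero _) hA0.ne', Real.log_exp]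
    have lhs_eq : (∑ j, Real.negMulLog (q j)) - β * (∑ j, q j * h j) - Real.log A
        = ∑ j, (Real.negMulLog (q j) + q j * Real.log (Real.exp (-(β * h j)) / A)) := by
      have e5 : (∑ j, Real.negMulLog (q j)) - β * (∑ j, q j * h j) - Real.log A
          = ∑ j, (Real.negMulLog (q j) + (-(β * (q j * h j)) - Real.log A * q j)) := by
        rw [Finset.sum_add_distrib, Finset.sum_sub_distrib]
        have t1 : ∑ x, -(β * (q x * h x)) = -(β * ∑ x, q x * h x) := by
          simp [Finset.mul_sum, Finset.sum_neg_distrib]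
        have t2 : ∑ x, Real.log A * q x = Real.log A := by
          rw [← Finset.mul_sum, hq1, mul_one]
        rw [t1, t2]
        ring
      rw [e5]
      exact Finset.sum_congr rfl (fun j _ => by rw [hlogeq j]; ring)
    have rhs_eq : ∑ j, (Real.exp (-(β * h j)) / A - q j) = 0 := by
      rw [Finset.sum_sub_distrib, ← Finset.sum_div, ← hAdef, hq1, div_self hA0.ne']
      ring
    rw [← lhs_eq, rhs_eq] at hsumineq
    linarith
  rw [hS, htr]
  have := le_trans hmain (Real.log_le_log hA0 hAZ)
  linarith [this]


lemma psd_smul_real {M : Matrix n n ℂ} (hM : M.PosSemidef) {c : ℝ} (hc : 0 ≤ c) :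
    (((c : ℝ) : ℂ) • M).PosSemidef := by
  constructor
  · have h1 := hM.isHermitian
    rw [Matrix.IsHermitian, Matrix.conjTranspose_smul, h1, Complex.star_def,
      Complex.conj_ofReal]
  · intro x
    exact (hM.smul (a := ((c:ℝ):ℂ)) (by exact_mod_cast hc)).2 x

lemma gibbsZ_eq {H : Matrix n n ℂ} (hH : H.IsHermitian) (β : ℝ) :
    gibbsZ β H = ∑ i, Real.exp (-(β * hH.eigenvalues i)) := by
  rw [gibbsZ, matFun_spec _ hH, unitary_conj_trace hH.eigenvectorUnitary.2,
    Matrix.trace_diagonal, ← Complex.ofReal_sum]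
  exact Complex.ofReal_re _

lemma gibbsZ_pos [Nonempty n] {H : Matrix n n ℂ} (hH : H.IsHermitian) (β : ℝ) :
    0 < gibbsZ β H := by
  rw [gibbsZ_eq hH β]
  exact Finset.sum_pos (fun i _ => Real.exp_pos _) Finset.univ_nonempty

lemma gibbs_dec {H : Matrix n n ℂ} (hH : H.IsHermitian) (β : ℝ) :
    gibbs β H = (hH.eigenvectorUnitary : Matrix n n ℂ) *
      diagonal (fun i => ((Real.exp (-(β * hH.eigenvalues i)) / gibbsZ β H : ℝ) : ℂ)) *
      star (hH.eigenvectorUnitary : Matrix n n ℂ) := by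
  rw [gibbs, matFun_spec _ hH, ← Matrix.smul_mul, ← Matrix.mul_smul, ← diagonal_smul]
  have hfun : ((gibbsZ β H : ℂ))⁻¹ • (fun i => ((Real.exp (-(β * hH.eigenvalues i)) : ℝ) : ℂ))
      = fun i => ((Real.exp (-(β * hH.eigenvalues i)) / gibbsZ β H : ℝ) : ℂ) := by
    funext i
    simp only [Pi.smul_apply, smul_eq_mul]
    push_cast
    rw [div_eq_inv_mul]
  rw [hfun]

lemma gibbs_herm {H : Matrix n n ℂ} (hH : H.IsHermitian) (β : ℝ) :
    (gibbs β H).IsHermitian := by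
  rw [gibbs_dec hH β]; exact herm_conj_diag _ _

lemma gibbs_psd [Nonempty n] {H : Matrix n n ℂ} (hH : H.IsHermitian) (β : ℝ) :
    (gibbs β H).PosSemidef := by
  rw [gibbs_dec hH β, Matrix.star_eq_conjTranspose]
  apply Matrix.PosSemidef.mul_mul_conjTranspose_same
  apply Matrix.PosSemidef.diagonal
  rw [Pi.le_def]
  intro i
  simp only [Pi.zero_apply]
  have : (0:ℝ) ≤ Real.exp (-(β * hH.eigenvalues i)) / gibbsZ β H :=
    div_nonneg (Real.exp_pos _).le (gibbsZ_pos hH β).le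
  exact_mod_cast this

lemma gibbs_trace [Nonempty n] {H : Matrix n n ℂ} (hH : H.IsHermitian) (β : ℝ) :
    (gibbs β H).trace = 1 := by
  rw [gibbs_dec hH β, unitary_conj_trace hH.eigenvectorUnitary.2, Matrix.trace_diagonal,
    ← Complex.ofReal_sum, ← Finset.sum_div, ← gibbsZ_eq hH β,
    div_self (gibbsZ_pos hH β).ne']
  norm_num

lemma gibbs_entropy [Nonempty n] {H : Matrix n n ℂ} (hH : H.IsHermitian) (β : ℝ) :
    vnEntropy (gibbs β H) = β * ((H * gibbs β H).trace).re + Real.log (gibbsZ β H) := by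
  set Z := gibbsZ β H with hZdef
  have hZ0 : 0 < Z := gibbsZ_pos hH β
  set lam : n → ℝ := hH.eigenvalues with hlamdef
  have hV := hH.eigenvectorUnitary.2
  have hHdec : H = (hH.eigenvectorUnitary : Matrix n n ℂ) *
      diagonal (fun i => (lam i : ℂ)) * star (hH.eigenvectorUnitary : Matrix n n ℂ) := by
    simpa [Function.comp_def] using hH.spectral_theorem
  have hS : vnEntropy (gibbs β H)
      = ∑ i, Real.negMulLog (Real.exp (-(β * lam i)) / Z) :=
    vnEntropy_spec (gibbs_herm hH β) hV _ (gibbs_dec hH β)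
  have htr : (H * gibbs β H).trace
      = ((∑ i, lam i * (Real.exp (-(β * lam i)) / Z) : ℝ) : ℂ) := by
    conv_lhs => rw [gibbs_dec hH β]
    rw [show H * ((hH.eigenvectorUnitary : Matrix n n ℂ)
          * diagonal (fun i => ((Real.exp (-(β * lam i)) / Z : ℝ) : ℂ))
          * star (hH.eigenvectorUnitary : Matrix n n ℂ))
        = ((hH.eigenvectorUnitary : Matrix n n ℂ) * diagonal (fun i => (lam i : ℂ))
          * star (hH.eigenvectorUnitary : Matrix n n ℂ))
          * ((hH.eigenvectorUnitary : Matrix n n ℂ)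
          * diagonal (fun i => ((Real.exp (-(β * lam i)) / Z : ℝ) : ℂ))
          * star (hH.eigenvectorUnitary : Matrix n n ℂ)) from by rw [← hHdec]]
    rw [conj_diag_mul hV, unitary_conj_trace hV, Matrix.trace_diagonal]
    push_cast
    rfl
  rw [hS, htr, Complex.ofReal_re]
  have per : ∀ i, Real.negMulLog (Real.exp (-(β * lam i)) / Z)
      = β * (lam i * (Real.exp (-(β * lam i)) / Z))
        + (Real.exp (-(β * lam i)) / Z) * Real.log Z := by
    intro i
    rw [Real.negMulLog, Real.log_div (Real.exp_ne_zero _) hZ0.ne', Real.log_exp]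
    ring
  rw [Finset.sum_congr rfl (fun i _ => per i), Finset.sum_add_distrib, ← Finset.mul_sum,
    ← Finset.sum_mul, ← Finset.sum_div, ← gibbsZ_eq hH β, ← hZdef, div_self hZ0.ne', one_mul]

lemma matSqrt_herm {A : Matrix n n ℂ} (hA : A.IsHermitian) : (matSqrt A).IsHermitian := by
  rw [matSqrt, matFun_spec _ hA]; exact herm_conj_diag _ _

lemma matSqrt_mul_self {A : Matrix n n ℂ} (hA : A.PosSemidef) :
    matSqrt A * matSqrt A = A := by
  rw [matSqrt, matFun_spec _ hA.isHermitian,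
    conj_diag_mul hA.isHermitian.eigenvectorUnitary.2]
  have h1 : (fun i => (Real.sqrt (hA.isHermitian.eigenvalues i) : ℂ)
      * (Real.sqrt (hA.isHermitian.eigenvalues i) : ℂ))
      = fun i => ((hA.isHermitian.eigenvalues i : ℝ) : ℂ) := by
    funext i
    rw [← Complex.ofReal_mul, Real.mul_self_sqrt (hA.eigenvalues_nonneg i)]
  rw [h1]
  have hdec : A = (hA.isHermitian.eigenvectorUnitary : Matrix n n ℂ) *
      diagonal (fun i => ((hA.isHermitian.eigenvalues i : ℝ) : ℂ)) *
      star (hA.isHermitian.eigenvectorUnitary : Matrix n n ℂ) := by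
    simpa [Function.comp_def] using hA.isHermitian.spectral_theorem
  exact hdec.symm

lemma sqrt_sandwich_trace {τ : Matrix n n ℂ} (hτ : τ.PosSemidef) (σ' : Matrix n n ℂ) :
    (matSqrt τ * σ' * matSqrt τ).trace = (σ' * τ).trace := by
  rw [Matrix.trace_mul_cycle, matSqrt_mul_self hτ, Matrix.trace_mul_comm]

lemma sqrt_sandwich_psd {τ σ' : Matrix n n ℂ} (hτ : τ.PosSemidef) (hσ' : σ'.PosSemidef) :
    (matSqrt τ * σ' * matSqrt τ).PosSemidef := by
  have h := hσ'.mul_mul_conjTranspose_same (matSqrt τ)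
  rwa [matSqrt_herm hτ.isHermitian] at h


/-- general measurements: for any POVM on `A` acting on the
canonical purification of `τ_β`, the averaged trade-off bound holds, and
consequently `E_f(τ_β) + βE ≤ S(τ_β)`. -/
theorem general_measurement_tradeoff {d : ℕ} {ι : Type*} [Fintype ι]
    (H : Matrix (Fin d) (Fin d) ℂ) (hH : H.IsHermitian) (β : ℝ) (hβ : 0 < β)
    (hτT : (gibbs β H)ᵀ = gibbs β H)
    (σ : ι → Matrix (Fin d) (Fin d) ℂ)
    (hσ : ∀ x, (σ x).PosSemidef) (hsum : ∑ x, σ x = 1)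
    (p : ι → ℝ) (hp : ∀ x, p x = ((σ x * gibbs β H).trace).re)
    (ρ : ι → Matrix (Fin d) (Fin d) ℂ)
    (hρ : ∀ x, p x ≠ 0 → ρ x = ((p x : ℂ))⁻¹ •
      (matSqrt (gibbs β H) * (σ x)ᵀ * matSqrt (gibbs β H)))
    (U : ι → Matrix (Fin d) (Fin d) ℂ) (hU : ∀ x, IsUnitaryMat (U x))
    (E : ι → ℝ)
    (hE : ∀ x, E x = ((H * (ρ x - U x * ρ x * star (U x))).trace).re) :
    (∑ x, p x * (vnEntropy (ρ x) + β * E x) ≤ vnEntropy (gibbs β H)) ∧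
    (EoF (gibbs β H) + β * ∑ x, p x * E x ≤ vnEntropy (gibbs β H)) := by
  rcases isEmpty_or_nonempty (Fin d) with hemp | hne
  · -- degenerate case `d = 0`
    have hp0 : ∀ x, p x = 0 := by
      intro x; rw [hp x, Matrix.trace_eq_zero_of_isEmpty]; simp
    have hS0 : vnEntropy (gibbs β H) = 0 := by
      rw [vnEntropy]; split <;> simp
    have hbdd : BddBelow {e : ℝ | ∃ (k : ℕ) (q : Fin k → ℝ)
        (ρs : Fin k → Matrix (Fin d) (Fin d) ℂ),
        (∀ i, 0 ≤ q i) ∧ (∀ i, IsDensity (ρs i)) ∧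
        (∑ i, (q i : ℂ) • ρs i = gibbs β H) ∧ e = ∑ i, q i * vnEntropy (ρs i)} := by
      refine ⟨0, fun e he => ?_⟩
      obtain ⟨k, q, ρs, hq, hds, _, he'⟩ := he
      rw [he']
      exact Finset.sum_nonneg fun i _ =>
        mul_nonneg (hq i) (vnEntropy_nonneg_of_density (hds i))
    constructor
    · rw [hS0]
      apply le_of_eq
      apply Finset.sum_eq_zero
      intro x _; rw [hp0 x]; ring
    · have hE0 : ∑ x, p x * E x = 0 := Finset.sum_eq_zero fun x _ => by rw [hp0 x]; ring
      rw [hS0, hE0, mul_zero, add_zero, EoF]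
      apply csInf_le hbdd
      refine ⟨0, Fin.elim0, Fin.elim0, (fun i => i.elim0), (fun i => i.elim0), ?_, ?_⟩
      · rw [show (Finset.univ : Finset (Fin 0)) = ∅ from rfl, Finset.sum_empty]
        ext i j
        exact isEmptyElim i
      · simp
  · -- main case
    set τ := gibbs β H with hτdef
    have hτherm : τ.IsHermitian := gibbs_herm hH β
    have hZpos : 0 < gibbsZ β H := gibbsZ_pos hH β
    have hτpsd : τ.PosSemidef := gibbs_psd hH β
    have hτtr : τ.trace = 1 := gibbs_trace hH β
    have hτdens : IsDensity τ := ⟨hτpsd, hτtr⟩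
    have hτT' : τᵀ = τ := hτT
    -- positivity and reality of p
    have key_trace : ∀ x, (σ x * τ).trace = (matSqrt (σ x) * τ * matSqrt (σ x)).trace := by
      intro x
      conv_lhs => rw [← matSqrt_mul_self (hσ x)]
      exact (Matrix.trace_mul_cycle _ _ _).symm
    have sandwich_psd : ∀ x, (matSqrt (σ x) * τ * matSqrt (σ x)).PosSemidef := by
      intro x
      have h := hτpsd.mul_mul_conjTranspose_same (matSqrt (σ x))
      rwa [matSqrt_herm (hσ x).isHermitian] at h
    have hpreal : ∀ x, (σ x * τ).trace = ((p x : ℝ) : ℂ) := by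
      intro x
      rw [hp x, key_trace x]
      exact psd_trace_re (sandwich_psd x)
    have hp0 : ∀ x, 0 ≤ p x := by
      intro x
      rw [hp x, key_trace x]
      simpa using (Complex.le_def.mp (psd_trace_nonneg (sandwich_psd x))).1
    -- the sandwiched matrices
    have traceT : ∀ x, (matSqrt τ * (σ x)ᵀ * matSqrt τ).trace = ((p x : ℝ) : ℂ) := by
      intro x
      rw [sqrt_sandwich_trace hτpsd, ← hpreal x]
      have e : (τ * σ x)ᵀ = (σ x)ᵀ * τ := by rw [Matrix.transpose_mul, hτT']
      rw [← e, Matrix.trace_transpose, Matrix.trace_mul_comm]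
    have sandT_psd : ∀ x, (matSqrt τ * (σ x)ᵀ * matSqrt τ).PosSemidef := fun x =>
      sqrt_sandwich_psd hτpsd ((hσ x).transpose)
    have hsmul : ∀ x, ((p x : ℝ) : ℂ) • ρ x = matSqrt τ * (σ x)ᵀ * matSqrt τ := by
      intro x
      by_cases hx : p x = 0
      · rw [hx]
        simp only [Complex.ofReal_zero, zero_smul]
        symm
        apply psd_trace_eq_zero (sandT_psd x)
        rw [traceT x, hx, Complex.ofReal_zero]
      · rw [hρ x hx, smul_smul, mul_inv_cancel₀ (by exact_mod_cast hx), one_smul]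
    have havg : ∑ x, ((p x : ℝ) : ℂ) • ρ x = τ := by
      rw [Finset.sum_congr rfl (fun x _ => hsmul x), ← Finset.sum_mul, ← Matrix.mul_sum,
        ← Matrix.transpose_sum, hsum, Matrix.transpose_one, Matrix.mul_one,
        matSqrt_mul_self hτpsd]
    have hsump : ∑ x, p x = 1 := by
      have h1 : ∑ x, ((p x : ℝ) : ℂ) = 1 := by
        rw [Finset.sum_congr rfl (fun x _ => (hpreal x).symm), ← Matrix.trace_sum,
          ← Finset.sum_mul, hsum, Matrix.one_mul, hτtr]
      exact_mod_cast h1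
    -- densities
    have hdens : ∀ x, p x ≠ 0 → IsDensity (ρ x) := by
      intro x hx
      constructor
      · rw [hρ x hx, show ((p x : ℝ) : ℂ)⁻¹ = (((p x)⁻¹ : ℝ) : ℂ) by push_cast; ring]
        exact psd_smul_real (sandT_psd x) (inv_nonneg.mpr (hp0 x))
      · rw [hρ x hx, Matrix.trace_smul, traceT x, smul_eq_mul,
          inv_mul_cancel₀ (by exact_mod_cast hx : ((p x : ℝ) : ℂ) ≠ 0)]
    -- per-x trade-off
    have main_per : ∀ x, p x * (vnEntropy (ρ x) + β * E x)
        ≤ p x * (β * ((H * ρ x).trace).re + Real.log (gibbsZ β H)) := by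
      intro x
      by_cases hx : p x = 0
      · rw [hx]; simp
      · apply mul_le_mul_of_nonneg_left _ (hp0 x)
        have hρx_dens := hdens x hx
        have hρx_psd := hρx_dens.1
        have hUx : U x ∈ Matrix.unitaryGroup (Fin d) ℂ := hU x
        have hρ'_dens : IsDensity (U x * ρ x * star (U x)) := by
          constructor
          · have h := hρx_psd.mul_mul_conjTranspose_same (U x)
            rwa [← Matrix.star_eq_conjTranspose] at h
          · rw [Matrix.mul_assoc, Matrix.trace_mul_comm, Matrix.mul_assoc,
              Matrix.mem_unitaryGroup_iff'.mp hUx, Matrix.mul_one, hρx_dens.2]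
        have hSinv : vnEntropy (U x * ρ x * star (U x)) = vnEntropy (ρ x) := by
          have hsymρ := hρx_psd.isHermitian
          have hdecρ : ρ x = (hsymρ.eigenvectorUnitary : Matrix (Fin d) (Fin d) ℂ) *
              diagonal (fun i => ((hsymρ.eigenvalues i : ℝ) : ℂ)) *
              star (hsymρ.eigenvectorUnitary : Matrix (Fin d) (Fin d) ℂ) := by
            simpa [Function.comp_def] using hsymρ.spectral_theorem
          have hdec' : U x * ρ x * star (U x)
              = (U x * (hsymρ.eigenvectorUnitary : Matrix (Fin d) (Fin d) ℂ)) *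
              diagonal (fun i => ((hsymρ.eigenvalues i : ℝ) : ℂ)) *
              star (U x * (hsymρ.eigenvectorUnitary : Matrix (Fin d) (Fin d) ℂ)) := by
            conv_lhs => rw [hdecρ]
            simp only [StarMul.star_mul, star_star, Matrix.mul_assoc]
          have hUW : U x * (hsymρ.eigenvectorUnitary : Matrix (Fin d) (Fin d) ℂ)
              ∈ Matrix.unitaryGroup (Fin d) ℂ := mul_mem hUx hsymρ.eigenvectorUnitary.2
          have herm' : (U x * ρ x * star (U x)).IsHermitian := by
            rw [hdec']; exact herm_conj_diag _ _
          rw [vnEntropy_spec herm' hUW _ hdec',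
            vnEntropy_spec hsymρ hsymρ.eigenvectorUnitary.2 _ hdecρ]
        have hineq := gibbs_var_ineq hH β hρ'_dens
        rw [← gibbsZ_eq hH β, hSinv] at hineq
        have hEx : E x = ((H * ρ x).trace).re
            - ((H * (U x * ρ x * star (U x))).trace).re := by
          rw [hE x, Matrix.mul_sub, Matrix.trace_sub, Complex.sub_re]
        rw [hEx]
        linarith
    have first : ∑ x, p x * (vnEntropy (ρ x) + β * E x) ≤ vnEntropy τ := by
      calc ∑ x, p x * (vnEntropy (ρ x) + β * E x)
          ≤ ∑ x, p x * (β * ((H * ρ x).trace).re + Real.log (gibbsZ β H)) :=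
            Finset.sum_le_sum (fun x _ => main_per x)
        _ = β * (∑ x, p x * ((H * ρ x).trace).re) + Real.log (gibbsZ β H) := by
            rw [Finset.sum_congr rfl (fun x _ => by ring :
              ∀ x ∈ Finset.univ, p x * (β * ((H * ρ x).trace).re + Real.log (gibbsZ β H))
                = β * (p x * ((H * ρ x).trace).re) + Real.log (gibbsZ β H) * p x),
              Finset.sum_add_distrib, ← Finset.mul_sum, ← Finset.mul_sum, hsump, mul_one]
        _ = β * ((H * τ).trace).re + Real.log (gibbsZ β H) := by
            have h2 : (H * τ).trace = ∑ x, ((p x : ℝ) : ℂ) * (H * ρ x).trace := by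
              conv_lhs => rw [← havg]
              rw [Matrix.mul_sum, Matrix.trace_sum]
              exact Finset.sum_congr rfl (fun x _ => by
                rw [Matrix.mul_smul, Matrix.trace_smul, smul_eq_mul])
            rw [h2, Complex.re_sum]
            congr 2
            exact Finset.sum_congr rfl (fun x _ => by rw [Complex.mul_re]; simp)
        _ = vnEntropy τ := (gibbs_entropy hH β).symm
    have hbdd : BddBelow {e : ℝ | ∃ (k : ℕ) (q : Fin k → ℝ)
        (ρs : Fin k → Matrix (Fin d) (Fin d) ℂ),
        (∀ i, 0 ≤ q i) ∧ (∀ i, IsDensity (ρs i)) ∧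
        (∑ i, (q i : ℂ) • ρs i = τ) ∧ e = ∑ i, q i * vnEntropy (ρs i)} := by
      refine ⟨0, fun e he => ?_⟩
      obtain ⟨k, q, ρs, hq, hds, _, he'⟩ := he
      rw [he']
      exact Finset.sum_nonneg fun i _ =>
        mul_nonneg (hq i) (vnEntropy_nonneg_of_density (hds i))
    have second : EoF τ ≤ ∑ x, p x * vnEntropy (ρ x) := by
      rw [EoF]
      apply csInf_le hbdd
      refine ⟨Fintype.card ι, fun i => p ((Fintype.equivFin ι).symm i),
        fun i => if p ((Fintype.equivFin ι).symm i) = 0 then τ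
          else ρ ((Fintype.equivFin ι).symm i), fun i => hp0 _, ?_, ?_, ?_⟩
      · intro i
        dsimp only
        split_ifs with hcase
        · exact hτdens
        · exact hdens _ hcase
      · rw [Equiv.sum_comp (Fintype.equivFin ι).symm
          (fun x => ((p x : ℝ) : ℂ) • (if p x = 0 then τ else ρ x))]
        rw [Finset.sum_congr rfl (fun x _ => ?_)]
        · exact havg
        · by_cases hx : p x = 0
          · rw [if_pos hx, hx]; simp
          · rw [if_neg hx]
      · rw [Equiv.sum_comp (Fintype.equivFin ι).symm
          (fun x => p x * vnEntropy (if p x = 0 then τ else ρ x))]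
        apply Finset.sum_congr rfl
        intro x _
        by_cases hx : p x = 0
        · rw [if_pos hx, hx]; ring
        · rw [if_neg hx]
    have expand : ∑ x, p x * (vnEntropy (ρ x) + β * E x)
        = ∑ x, p x * vnEntropy (ρ x) + β * ∑ x, p x * E x := by
      rw [Finset.mul_sum, ← Finset.sum_add_distrib]
      exact Finset.sum_congr rfl (fun x _ => by ring)
    refine ⟨first, ?_⟩
    have h1 : ∑ x, p x * vnEntropy (ρ x) + β * ∑ x, p x * E x ≤ vnEntropy τ := by
      rw [← expand]; exact first
    linarith

end
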